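/- If (h, c) is a 2-abelian 3-cocycle on an abelian group G with coefficients in an abelian group M, then the trace q(x) := c(x,x) defines a quadratic form on G; moreover its associated bilinear form satisfies b_q(y,z) = c(y,z) + c(z,y). -/

import Mathlib

/-- A function of two variables is biadditive if it is additive in each argument. -/
def IsBiadd {A B M : Type*} [AddCommGroup A] [AddCommGroup B] [AddCommGroup M]
    (f : A → B → M) : Prop :=
  (∀ a a' b, f (a + a') b = f a b + f a' b) ∧
  (∀ a b b', f a (b + b') = f a b + f a b')

/-- A quadratic form: even, with biadditive polar form. -/
def IsQuadratic {G M : Type*} [AddCommGroup G] [AddCommGroup M] (q : G → M) : Prop :=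
  (∀ a, q (-a) = q a) ∧
  IsBiadd (fun a b => q (a + b) - q a - q b)

/-- A 2-abelian 3-cocycle: a 3-cocycle `h` together with `c` satisfying the
hexagon compatibility conditions. -/
def IsAb3Cocycle {G M : Type*} [AddCommGroup G] [AddCommGroup M]
    (h : G → G → G → M) (c : G → G → M) : Prop :=
  (∀ a b d e, h a b d + h a (b + d) e + h b d e = h (a + b) d e + h a b (d + e)) ∧
  (∀ x y z, h y z x + c x (y + z) + h x y z = c x z + h y x z + c x y) ∧
  (∀ x y z, -h z x y + c (x + y) z - h x y z = c x z - h x z y + c y z)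

/-!
The two hexagon identities say that `c` is additive in each variable up to terms in `h`,
and these terms cancel in the symmetrization `c x y + c y x`, which is therefore biadditive.
Expanding `c (y + z) (y + z)` with both hexagons and cancelling the remaining `h`-terms with
the cocycle condition at `(y, z, y, z)` shows that this symmetrization is the polar form of
`q x = c x x`. A function whose polar form is a biadditive `B` with `B a a = 2 q a` is even,
since `q 0 - q a - q (-a) = B a (-a) = -2 q a` and `q 0 = 0`.
-/

section

variable {A B M : Type*} [AddCommGroup A] [AddCommGroup B] [AddCommGroup M]

theorem IsBiadd.map_zero_right {f : A → B → M} (hf : IsBiadd f) (a : A) : f a 0 = 0 :=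
  (AddMonoidHom.mk' (f a) (hf.2 a)).map_zero

theorem IsBiadd.map_neg_right {f : A → B → M} (hf : IsBiadd f) (a : A) (b : B) :
    f a (-b) = -f a b :=
  (AddMonoidHom.mk' (f a) (hf.2 a)).map_neg b

end

theorem isQuadratic_of_polar_eq {G M : Type*} [AddCommGroup G] [AddCommGroup M]
    {q : G → M} {B : G → G → M} (hB : IsBiadd B)
    (hpolar : ∀ a b, q (a + b) - q a - q b = B a b) (hdiag : ∀ a, B a a = q a + q a) :
    IsQuadratic q := by
  have hq0 : q 0 = 0 := by
    have h00 := hpolar 0 0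
    rw [add_zero, hB.map_zero_right] at h00
    linear_combination (norm := abel) -h00
  refine ⟨fun a => ?_, ?_⟩
  · have h := hpolar a (-a)
    rw [add_neg_cancel, hq0, hB.map_neg_right, hdiag] at h
    linear_combination (norm := abel) -h
  · have hpolar_eq : (fun a b => q (a + b) - q a - q b) = B := funext fun a => funext (hpolar a)
    rwa [hpolar_eq]

namespace IsAb3Cocycle

variable {G M : Type*} [AddCommGroup G] [AddCommGroup M]
  {h : G → G → G → M} {c : G → G → M}

theorem c_add_right (hc : IsAb3Cocycle h c) (x y z : G) :
    c x (y + z) = c x y + c x z + h y x z - h y z x - h x y z := by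
  linear_combination (norm := abel) hc.2.1 x y z

theorem c_add_left (hc : IsAb3Cocycle h c) (x y z : G) :
    c (x + y) z = c x z + c y z - h x z y + h z x y + h x y z := by
  linear_combination (norm := abel) hc.2.2 x y z

theorem isBiadd_symm (hc : IsAb3Cocycle h c) : IsBiadd fun x y => c x y + c y x := by
  refine ⟨fun x y z => ?_, fun x y z => ?_⟩ <;> beta_reduce
  · linear_combination (norm := abel) hc.c_add_left x y z + hc.c_add_right z x y
  · linear_combination (norm := abel) hc.c_add_right x y z + hc.c_add_left y z x

theorem polar_diag (hc : IsAb3Cocycle h c) (y z : G) :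
    c (y + z) (y + z) - c y y - c z z = c y z + c z y := by
  have hcocycle := hc.1 y z y z
  rw [add_comm z y] at hcocycle
  linear_combination (norm := abel)
    hc.c_add_left y z (y + z) + hc.c_add_right y y z + hc.c_add_right z y z - hcocycle

end IsAb3Cocycle

theorem stmt6 {G M : Type*} [AddCommGroup G] [AddCommGroup M]
    (h : G → G → G → M) (c : G → G → M) (hc : IsAb3Cocycle h c) :
    IsQuadratic (fun x => c x x) ∧
    ∀ y z, c (y + z) (y + z) - c y y - c z z = c y z + c z y :=
  ⟨isQuadratic_of_polar_eq hc.isBiadd_symm hc.polar_diag fun _ => rfl, hc.polar_diag⟩
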